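/- The map X ↦ Ent_{1,σ}(X) is convex on positive semi-definite matrices: for X, Y ≥ 0, Ent_{1,σ}((X+Y)/2) ≤ (Ent_{1,σ}(X) + Ent_{1,σ}(Y))/2. -/

import Mathlib

open Matrix BigOperators
open scoped ComplexOrder

noncomputable section

variable {n : Type*} [Fintype n] [DecidableEq n]

/-- Apply a real function to a matrix via its spectral decomposition
(defined to be `0` if the matrix is not Hermitian). -/
noncomputable def matFun (A : Matrix n n ℂ) (f : ℝ → ℝ) : Matrix n n ℂ :=
  if hA : A.IsHermitian then
    (hA.eigenvectorUnitary : Matrix n n ℂ) *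
      Matrix.diagonal (fun i => (f (hA.eigenvalues i) : ℂ)) *
      star (hA.eigenvectorUnitary : Matrix n n ℂ)
  else 0

/-- Real power of a (Hermitian) matrix. -/
noncomputable def mpow (A : Matrix n n ℂ) (r : ℝ) : Matrix n n ℂ :=
  matFun A (fun x => x ^ r)

/-- Logarithm of a (Hermitian) matrix. -/
noncomputable def mlog (A : Matrix n n ℂ) : Matrix n n ℂ :=
  matFun A Real.log

/-- Absolute value `|X| = √(X† X)` of a matrix. -/
noncomputable def mAbs (X : Matrix n n ℂ) : Matrix n n ℂ :=
  mpow (Xᴴ * X) (1/2 : ℝ)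

/-- Schatten `p`-(quasi)norm `(tr |X|^p)^{1/p}`. -/
noncomputable def schatten (p : ℝ) (X : Matrix n n ℂ) : ℝ :=
  ((mpow (mAbs X) p).trace.re) ^ (1/p)

/-- `Γ_σ^{1/p}(X) = σ^{1/(2p)} X σ^{1/(2p)}`. -/
noncomputable def gammaPow (σ : Matrix n n ℂ) (p : ℝ) (X : Matrix n n ℂ) :
    Matrix n n ℂ :=
  mpow σ (1/(2*p)) * X * mpow σ (1/(2*p))

/-- Weighted norm `‖X‖_{p,σ} = ‖Γ_σ^{1/p}(X)‖_p`. -/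
noncomputable def wnorm (σ : Matrix n n ℂ) (p : ℝ) (X : Matrix n n ℂ) : ℝ :=
  schatten p (gammaPow σ p X)

/-- The power operator `I_{q,p}(X) = Γ_σ^{-1/q}(|Γ_σ^{1/p}(X)|^{p/q})`. -/
noncomputable def powOp (σ : Matrix n n ℂ) (q p : ℝ) (X : Matrix n n ℂ) :
    Matrix n n ℂ :=
  mpow σ (-(1/(2*q))) * mpow (mAbs (gammaPow σ p X)) (p/q) * mpow σ (-(1/(2*q)))

/-- Umegaki relative entropy `D(ρ‖σ) = tr(ρ log ρ) - tr(ρ log σ)`. -/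
noncomputable def relEnt (ρ σ : Matrix n n ℂ) : ℝ :=
  ((ρ * mlog ρ).trace - (ρ * mlog σ).trace).re

/-- The entropy function `Ent_{p,σ}(X)`. -/
noncomputable def Ent (σ : Matrix n n ℂ) (p : ℝ) (X : Matrix n n ℂ) : ℝ :=
  ((mpow (gammaPow σ p X) p * mlog (mpow (gammaPow σ p X) p)).trace).re -
    ((mpow (gammaPow σ p X) p * mlog σ).trace).re -
    (wnorm σ p X) ^ p * Real.log ((wnorm σ p X) ^ p)

end

/-!
With `A = Γ_σ(X)` and `φ x = x log x`, `Ent_{1,σ}(X) = tr φ(A) - φ(tr A) - re tr (A log σ)`,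
and the last term is linear in `X`. Let `a`, `b` be the diagonals of `A = Γ_σ(X)`, `B = Γ_σ(Y)`
in an eigenbasis of `C = (A + B) / 2`, so that the eigenvalues of `C` are `(a + b) / 2`. The
function `v ↦ ∑ φ(vᵢ) - φ(∑ vᵢ) = ∑ vᵢ log (vᵢ / ∑ v)` is convex on the nonnegative orthant,
being a sum of perspectives of `φ`, and by Schur's majorization its value at `a` is at most its
value at the spectrum of `A`.
-/

section

open Real

variable {n : Type*} [Fintype n] [DecidableEq n]

lemma Matrix.IsHermitian.trace_cfc {𝕜 : Type*} [RCLike 𝕜] {A : Matrix n n 𝕜}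
    (hA : A.IsHermitian) (f : ℝ → ℝ) :
    (cfc f A).trace = ∑ i, (f (hA.eigenvalues i) : 𝕜) := by
  rw [hA.cfc_eq, IsHermitian.cfc, Unitary.conjStarAlgAut_apply, trace_mul_cycle,
    Unitary.coe_star_mul_self, one_mul, trace_diagonal]
  rfl

section FunctionalCalculus

variable {A : Matrix n n ℂ}

lemma matFun_eq_cfc (hA : A.IsHermitian) (f : ℝ → ℝ) : matFun A f = cfc f A := by
  rw [matFun, dif_pos hA, hA.cfc_eq, IsHermitian.cfc, Unitary.conjStarAlgAut_apply]
  rfl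

lemma matFun_isHermitian (A : Matrix n n ℂ) (f : ℝ → ℝ) : (matFun A f).IsHermitian := by
  by_cases hA : A.IsHermitian
  · rw [matFun_eq_cfc hA]
    exact cfc_predicate f A
  · rw [matFun, dif_neg hA]
    exact isHermitian_zero

lemma mpow_one (hA : A.IsHermitian) : mpow A 1 = A := by
  simp only [mpow, matFun_eq_cfc hA, rpow_one]
  exact cfc_id' ℝ A

lemma mAbs_eq_self (hA : A.PosSemidef) : mAbs A = A := by
  have hAA : (Aᴴ * A).IsHermitian := (posSemidef_conjTranspose_mul_self A).1
  rw [mAbs, mpow, matFun_eq_cfc hAA, hA.1.eq, ← sq, ← cfc_comp_pow _ _ _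
    ((A.finite_real_spectrum.image _).continuousOn _) hA.1.isSelfAdjoint]
  refine (cfc_congr fun x hx => ?_).trans (cfc_id' ℝ A hA.1.isSelfAdjoint)
  obtain ⟨i, rfl⟩ := hA.1.spectrum_real_eq_range_eigenvalues ▸ hx
  exact sqrt_eq_rpow _ ▸ sqrt_sq (hA.eigenvalues_nonneg i)

lemma trace_mul_mlog_re (hA : A.IsHermitian) :
    (A * mlog A).trace.re = ∑ i, hA.eigenvalues i * log (hA.eigenvalues i) := by
  have hlog : ContinuousOn log (spectrum ℝ A) := A.finite_real_spectrum.continuousOn _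
  rw [mlog, matFun_eq_cfc hA]
  nth_rw 1 [← cfc_id' ℝ A]
  rw [← cfc_mul (fun x => x) log A continuousOn_id hlog, hA.trace_cfc]
  simp [Complex.re_sum]

lemma Matrix.IsHermitian.re_trace_eq_sum_eigenvalues (hA : A.IsHermitian) :
    A.trace.re = ∑ i, hA.eigenvalues i := by
  simp [hA.trace_eq_sum_eigenvalues, Complex.re_sum]

end FunctionalCalculus

/-- `x log (x / y)` is the supremum over `r > 0` of the linear forms `x (log r + 1) - y r`. -/
lemma affine_le_mul_log_sub_mul_log {x y r : ℝ} (hx : 0 ≤ x) (hxy : x ≤ y) (hr : 0 < r) :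
    x * (log r + 1) - y * r ≤ x * log x - x * log y := by
  rcases hx.eq_or_lt with rfl | hx
  · simp only [zero_mul, zero_sub, sub_self, neg_nonpos]
    exact mul_nonneg hxy hr.le
  have hy : 0 < y := hx.trans_le hxy
  have hlog := log_le_sub_one_of_pos (show 0 < y * r / x by positivity)
  rw [log_div (by positivity) hx.ne', log_mul hy.ne' hr.ne'] at hlog
  have := mul_le_mul_of_nonneg_left hlog hx.le
  have hxyr : x * (y * r / x - 1) = y * r - x := by field_simp
  linarith

lemma convexOn_mul_log_sub_mul_log :
    ConvexOn ℝ {p : ℝ × ℝ | 0 ≤ p.1 ∧ p.1 ≤ p.2} (fun p => p.1 * log p.1 - p.1 * log p.2) := by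
  refine ⟨?_, ?_⟩
  · rintro p ⟨hp₀, hp⟩ q ⟨hq₀, hq⟩ a b ha hb -
    exact ⟨by simp only [Prod.fst_add, Prod.smul_fst, smul_eq_mul]; positivity,
      by simp only [Prod.fst_add, Prod.snd_add, Prod.smul_fst, Prod.smul_snd, smul_eq_mul]
         gcongr⟩
  rintro ⟨x₁, y₁⟩ ⟨hx₁, hxy₁⟩ ⟨x₂, y₂⟩ ⟨hx₂, hxy₂⟩ a b ha hb hab
  simp only [Prod.smul_mk, Prod.mk_add_mk, smul_eq_mul] at hx₁ hxy₁ hx₂ hxy₂ ⊢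
  rcases (by positivity : 0 ≤ a * x₁ + b * x₂).eq_or_lt with hx | hx
  · have h₁ : a * x₁ = 0 := by nlinarith [mul_nonneg ha hx₁, mul_nonneg hb hx₂]
    have h₂ : b * x₂ = 0 := by nlinarith [mul_nonneg ha hx₁, mul_nonneg hb hx₂]
    have h : a * (x₁ * log x₁ - x₁ * log y₁) + b * (x₂ * log x₂ - x₂ * log y₂) = 0 := by
      linear_combination (log x₁ - log y₁) * h₁ + (log x₂ - log y₂) * h₂
    simp [← hx, h]
  have hy : 0 < a * y₁ + b * y₂ := hx.trans_le (by gcongr)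
  set r := (a * x₁ + b * x₂) / (a * y₁ + b * y₂)
  have hr : 0 < r := by positivity
  have hyr : (a * y₁ + b * y₂) * r = a * x₁ + b * x₂ := mul_div_cancel₀ _ hy.ne'
  have hlogr : log r = log (a * x₁ + b * x₂) - log (a * y₁ + b * y₂) := log_div hx.ne' hy.ne'
  have h₁ := affine_le_mul_log_sub_mul_log hx₁ hxy₁ hr
  have h₂ := affine_le_mul_log_sub_mul_log hx₂ hxy₂ hr
  calc (a * x₁ + b * x₂) * log (a * x₁ + b * x₂) - (a * x₁ + b * x₂) * log (a * y₁ + b * y₂)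
      = a * (x₁ * (log r + 1) - y₁ * r) + b * (x₂ * (log r + 1) - y₂ * r) := by
        rw [hlogr]; linear_combination hyr
    _ ≤ a * (x₁ * log x₁ - x₁ * log y₁) + b * (x₂ * log x₂ - x₂ * log y₂) := by gcongr

/-- `-(∑ v) * H(v / ∑ v)`, with `H` the Shannon entropy. -/
noncomputable def mulLogGap {ι : Type*} [Fintype ι] (v : ι → ℝ) : ℝ :=
  ∑ i, v i * log (v i) - (∑ i, v i) * log (∑ i, v i)

lemma mulLogGap_eq_sum {ι : Type*} [Fintype ι] (v : ι → ℝ) :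
    mulLogGap v = ∑ i, (v i * log (v i) - v i * log (∑ j, v j)) := by
  rw [mulLogGap, Finset.sum_sub_distrib, Finset.sum_mul]

lemma convexOn_mulLogGap {ι : Type*} [Fintype ι] :
    ConvexOn ℝ (Set.Ici (0 : ι → ℝ)) mulLogGap := by
  refine ⟨convex_Ici 0, fun v hv w hw a b ha hb hab => ?_⟩
  have hmem {u : ι → ℝ} (hu : 0 ≤ u) (i : ι) :
      (u i, ∑ j, u j) ∈ {p : ℝ × ℝ | 0 ≤ p.1 ∧ p.1 ≤ p.2} :=
    ⟨hu i, Finset.single_le_sum (fun j _ => hu j) (Finset.mem_univ i)⟩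
  have hcomb (i : ι) : ((a • v + b • w) i, ∑ j, (a • v + b • w) j) =
      a • (v i, ∑ j, v j) + b • (w i, ∑ j, w j) := by
    simp [Finset.sum_add_distrib, Finset.mul_sum]
  simp only [mulLogGap_eq_sum, smul_eq_mul, Finset.mul_sum, ← Finset.sum_add_distrib]
  refine Finset.sum_le_sum fun i _ => ?_
  have := convexOn_mul_log_sub_mul_log.2 (hmem hv i) (hmem hw i) ha hb hab
  rw [← hcomb] at this
  exact this

lemma ConvexOn.sum_map_mulVec_le {s : Set ℝ} {f : ℝ → ℝ} (hf : ConvexOn ℝ s f)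
    {M : Matrix n n ℝ} (hM : M ∈ doublyStochastic ℝ n) {x : n → ℝ} (hx : ∀ i, x i ∈ s) :
    ∑ i, f ((M *ᵥ x) i) ≤ ∑ i, f (x i) :=
  calc ∑ i, f ((M *ᵥ x) i)
      ≤ ∑ i, ∑ j, M i j * f (x j) := Finset.sum_le_sum fun i _ =>
        hf.map_sum_le (fun j _ => nonneg_of_mem_doublyStochastic hM)
          (sum_row_of_mem_doublyStochastic hM i) fun j _ => hx j
    _ = ∑ j, (∑ i, M i j) * f (x j) := by rw [Finset.sum_comm]; simp only [Finset.sum_mul]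
    _ = ∑ i, f (x i) := by simp only [sum_col_of_mem_doublyStochastic hM, one_mul]

lemma normSq_mem_doublyStochastic {U : Matrix n n ℂ} (hU : U ∈ unitaryGroup n ℂ) :
    of (fun i j => Complex.normSq (U i j)) ∈ doublyStochastic ℝ n := by
  refine mem_doublyStochastic_iff_sum.2
    ⟨fun i j => Complex.normSq_nonneg _, fun i => ?_, fun j => ?_⟩
  · have h := congrFun₂ (mem_unitaryGroup_iff.1 hU) i i
    simp only [mul_apply, star_apply, one_apply_eq, Complex.star_def, Complex.mul_conj] at h
    exact_mod_cast h
  · have h := congrFun₂ (mem_unitaryGroup_iff'.1 hU) j j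
    simp only [mul_apply, star_apply, one_apply_eq, Complex.star_def, mul_comm _ (U _ j),
      Complex.mul_conj] at h
    exact_mod_cast h

lemma re_diag_mul_diagonal_mul_star (W : Matrix n n ℂ) (d : n → ℝ) (i : n) :
    ((W * diagonal (fun j => (d j : ℂ)) * star W) i i).re =
      (of (fun i j => Complex.normSq (W i j)) *ᵥ d) i := by
  rw [mul_apply, Complex.re_sum]
  simp only [mul_diagonal, star_apply, mulVec, dotProduct, of_apply]
  refine Finset.sum_congr rfl fun j _ => ?_
  rw [mul_right_comm, Complex.star_def, Complex.mul_conj, ← Complex.ofReal_mul, Complex.ofReal_re]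

lemma sum_re_diag_star_mul_mul {V : Matrix n n ℂ} (hV : V ∈ unitaryGroup n ℂ) (A : Matrix n n ℂ) :
    ∑ i, ((star V * A * V) i i).re = A.trace.re := by
  rw [← Complex.re_sum]
  change (star V * A * V).trace.re = _
  rw [trace_mul_cycle, mem_unitaryGroup_iff.1 hV, one_mul]

lemma Matrix.IsHermitian.eigenvalues_eq_re_diag {A : Matrix n n ℂ} (hA : A.IsHermitian) (i : n) :
    hA.eigenvalues i =
      ((star (hA.eigenvectorUnitary : Matrix n n ℂ) * A * hA.eigenvectorUnitary) i i).re := by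
  have h := hA.conjStarAlgAut_star_eigenvectorUnitary
  rw [Unitary.conjStarAlgAut_apply, Unitary.coe_star, star_star] at h
  simp [h]

/-- Schur's majorization: the diagonal of a Hermitian matrix in any orthonormal basis is a
doubly stochastic average of its eigenvalues. -/
lemma Matrix.IsHermitian.sum_map_re_diag_le {A : Matrix n n ℂ} (hA : A.IsHermitian)
    {V : Matrix n n ℂ} (hV : V ∈ unitaryGroup n ℂ) {s : Set ℝ} {f : ℝ → ℝ}
    (hf : ConvexOn ℝ s f) (hs : ∀ i, hA.eigenvalues i ∈ s) :
    ∑ i, f ((star V * A * V) i i).re ≤ ∑ i, f (hA.eigenvalues i) := by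
  set W := star V * (hA.eigenvectorUnitary : Matrix n n ℂ)
  have hW : W ∈ unitaryGroup n ℂ := mul_mem (Unitary.star_mem hV) hA.eigenvectorUnitary.2
  have hconj : star V * A * V = W * diagonal (fun j => (hA.eigenvalues j : ℂ)) * star W := by
    conv_lhs => rw [hA.spectral_theorem, Unitary.conjStarAlgAut_apply]
    simp only [W, star_mul, star_star, Matrix.mul_assoc]
    rfl
  simp only [hconj, re_diag_mul_diagonal_mul_star]
  exact hf.sum_map_mulVec_le (normSq_mem_doublyStochastic hW) hs

lemma Matrix.PosSemidef.mulLogGap_re_diag_le {A : Matrix n n ℂ} (hA : A.PosSemidef)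
    {V : Matrix n n ℂ} (hV : V ∈ unitaryGroup n ℂ) :
    mulLogGap (fun i => ((star V * A * V) i i).re) ≤ mulLogGap hA.1.eigenvalues := by
  have hsum : ∑ i, ((star V * A * V) i i).re = ∑ i, hA.1.eigenvalues i := by
    rw [sum_re_diag_star_mul_mul hV, hA.1.re_trace_eq_sum_eigenvalues]
  simp only [mulLogGap, hsum, sub_le_sub_iff_right]
  exact hA.1.sum_map_re_diag_le hV convexOn_mul_log fun i => hA.eigenvalues_nonneg i

lemma mulLogGap_eigenvalues_smul_add_smul_le {A B C : Matrix n n ℂ} (hA : A.PosSemidef)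
    (hB : B.PosSemidef) (hC : C.IsHermitian) {a b : ℝ} (ha : 0 ≤ a) (hb : 0 ≤ b) (hab : a + b = 1)
    (hCAB : C = a • A + b • B) :
    mulLogGap hC.eigenvalues ≤ a * mulLogGap hA.1.eigenvalues + b * mulLogGap hB.1.eigenvalues := by
  subst hCAB
  set V := (hC.eigenvectorUnitary : Matrix n n ℂ)
  let d (M : Matrix n n ℂ) (i : n) : ℝ := ((star V * M * V) i i).re
  have hd : hC.eigenvalues = a • d A + b • d B := funext fun i => by
    rw [hC.eigenvalues_eq_re_diag]
    simp [d, V, mul_add, add_mul]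
  have hd_nonneg {M : Matrix n n ℂ} (hM : M.PosSemidef) : 0 ≤ d M := fun i =>
    (Complex.nonneg_iff.1 (hM.conjTranspose_mul_mul_same V).diag_nonneg).1
  calc mulLogGap hC.eigenvalues
      ≤ a * mulLogGap (d A) + b * mulLogGap (d B) :=
        hd ▸ convexOn_mulLogGap.2 (hd_nonneg hA) (hd_nonneg hB) ha hb hab
    _ ≤ a * mulLogGap hA.1.eigenvalues + b * mulLogGap hB.1.eigenvalues := by
        gcongr
        exacts [hA.mulLogGap_re_diag_le hC.eigenvectorUnitary.2,
          hB.mulLogGap_re_diag_le hC.eigenvectorUnitary.2]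

lemma Matrix.PosSemidef.gammaPow {X : Matrix n n ℂ} (hX : X.PosSemidef) (σ : Matrix n n ℂ) (p : ℝ) :
    (gammaPow σ p X).PosSemidef := by
  have hσ : (mpow σ (1 / (2 * p))).IsHermitian := matFun_isHermitian σ _
  have h := hX.mul_mul_conjTranspose_same (mpow σ (1 / (2 * p)))
  rwa [hσ.eq] at h

lemma wnorm_one {σ X : Matrix n n ℂ} (h : (gammaPow σ 1 X).PosSemidef) :
    wnorm σ 1 X = (gammaPow σ 1 X).trace.re := by
  rw [wnorm, schatten, mAbs_eq_self h, mpow_one h.1, div_one, rpow_one]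

lemma Ent_one_eq {σ X : Matrix n n ℂ} (h : (gammaPow σ 1 X).PosSemidef) :
    Ent σ 1 X = mulLogGap h.1.eigenvalues - (gammaPow σ 1 X * mlog σ).trace.re := by
  rw [Ent, mpow_one h.1, wnorm_one h, rpow_one, trace_mul_mlog_re h.1,
    h.1.re_trace_eq_sum_eigenvalues, mulLogGap]
  ring

end

theorem ent_one_convex_general {n : Type*} [Fintype n] [DecidableEq n]
    (σ : Matrix n n ℂ)
    (X Y : Matrix n n ℂ) (hX : X.PosSemidef) (hY : Y.PosSemidef) :
    Ent σ 1 (((2 : ℂ)⁻¹) • (X + Y)) ≤ (Ent σ 1 X + Ent σ 1 Y) / 2 := by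
  set A := gammaPow σ 1 X
  set B := gammaPow σ 1 Y
  have hA : A.PosSemidef := hX.gammaPow σ 1
  have hB : B.PosSemidef := hY.gammaPow σ 1
  have hC := ((hX.add hY).smul (by norm_num [Complex.nonneg_iff] : (0 : ℂ) ≤ 2⁻¹)).gammaPow σ 1
  have hCAB : gammaPow σ 1 ((2 : ℂ)⁻¹ • (X + Y)) = (2⁻¹ : ℝ) • A + (2⁻¹ : ℝ) • B := by
    ext i j
    simp [A, B, gammaPow, mul_add, add_mul]
  have hlog : ((gammaPow σ 1 ((2 : ℂ)⁻¹ • (X + Y))) * mlog σ).trace.re =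
      ((A * mlog σ).trace.re + (B * mlog σ).trace.re) / 2 := by
    rw [hCAB, add_mul, smul_mul_assoc, smul_mul_assoc, trace_add, trace_smul, trace_smul,
      Complex.add_re, Complex.smul_re, Complex.smul_re]
    ring
  have hgap := mulLogGap_eigenvalues_smul_add_smul_le hA hB hC.1 (by norm_num) (by norm_num)
    (by norm_num) hCAB
  rw [Ent_one_eq hC, Ent_one_eq hA, Ent_one_eq hB, hlog]
  linarith

/-- Midpoint convexity of `X ↦ Ent_{1,σ}(X)` on positive semi-definite matrices. -/
theorem ent_one_convex {n : Type*} [Fintype n] [DecidableEq n]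
    (σ : Matrix n n ℂ) (hσ : σ.PosDef) (hσ1 : σ.trace = 1)
    (X Y : Matrix n n ℂ) (hX : X.PosSemidef) (hY : Y.PosSemidef) :
    Ent σ 1 (((2 : ℂ)⁻¹) • (X + Y)) ≤ (Ent σ 1 X + Ent σ 1 Y) / 2 :=
  ent_one_convex_general σ X Y hX hY
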